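/- Call a subspace L ⊆ Im(𝕆) isotropic for λ if λ(a,b,c) = 0 for all a,b,c ∈ L, where λ(a,b,c) = ([a,b],c). Then every isotropic subspace of Im(𝕆) has dimension at most 4. -/

import Mathlib

noncomputable section

/-- The octonions, realized via the Cayley–Dickson construction as pairs of quaternions. -/
abbrev Octo : Type := Quaternion ℝ × Quaternion ℝ

namespace Octo

/-- Octonion multiplication (Cayley–Dickson): `(a,b)(c,d) = (ac - d̄b, da + bc̄)`. -/
def omul (x y : Octo) : Octo :=
  (x.1 * y.1 - star y.2 * x.2, y.2 * x.1 + x.2 * star y.1)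

/-- The octonion unit. -/
def oone : Octo := (1, 0)

/-- Octonion conjugation. -/
def oconj (x : Octo) : Octo := (star x.1, -x.2)

/-- Real part of an octonion. -/
def ore (x : Octo) : ℝ := x.1.re

/-- The standard inner product `(x,y) = re (x * ȳ)`. -/
def oinner (x y : Octo) : ℝ := ore (omul x (oconj y))

/-- An octonion is pure imaginary if `x̄ = -x`. -/
def IsIm (x : Octo) : Prop := oconj x = -x

/-- The commutator `[a,b] = a*b - b*a`. -/
def comm (a b : Octo) : Octo := omul a b - omul b a

/-- The octonionic vector (cross) product on imaginary octonions: half the commutator. -/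
def cross (a b : Octo) : Octo := (1/2 : ℝ) • comm a b

/-- The 3-form `λ(a,b,c) = ([a,b],c)`. -/
def lam (a b c : Octo) : ℝ := oinner (comm a b) c

end Octo

/-!
Fix `a ≠ 0` in `L`. The map `b ↦ [a,b]` sends `L` into `Im 𝕆`, and isotropy says exactly that
its image `[a,L]` is orthogonal to `L`; hence `dim L + dim [a,L] ≤ dim Im 𝕆 = 7`. On `Im 𝕆` the
identity `|[a,b]|² = 4 (|a|²|b|² - (a,b)²)` shows that `[a,b] = 0` only for `b ∈ ℝa`, so
`dim [a,L] ≥ dim L - 1`, and therefore `2 dim L ≤ 8`.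
-/

section

open Module

variable {K V W : Type*} [DivisionRing K] [AddCommGroup V] [Module K V] [FiniteDimensional K V]
  [AddCommGroup W] [Module K W]

theorem Submodule.finrank_map_add_finrank_inf_ker (f : V →ₗ[K] W) (p : Submodule K V) :
    finrank K (p.map f) + finrank K ↥(p ⊓ LinearMap.ker f) = finrank K p := by
  rw [← LinearMap.range_domRestrict, ← Submodule.map_comap_subtype,
    Submodule.finrank_map_subtype_eq, ← LinearMap.ker_domRestrict]
  exact (f.domRestrict p).finrank_range_add_finrank_ker

end

namespace Octo

open Module Quaternion

theorem oinner_eq (x y : Octo) : oinner x y =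
    x.1.re * y.1.re + x.1.imI * y.1.imI + x.1.imJ * y.1.imJ + x.1.imK * y.1.imK +
    x.2.re * y.2.re + x.2.imI * y.2.imI + x.2.imJ * y.2.imJ + x.2.imK * y.2.imK := by
  simp [oinner, ore, omul, oconj]
  ring

theorem oinner_self_eq_zero {x : Octo} : oinner x x = 0 ↔ x = 0 := by
  refine ⟨fun h => ?_, fun h => by simp [h, oinner_eq]⟩
  rw [oinner_eq] at h
  ext <;> simp only [Prod.fst_zero, Prod.snd_zero, re_zero, imI_zero, imJ_zero, imK_zero] <;>
    nlinarith [sq_nonneg x.1.re, sq_nonneg x.1.imI, sq_nonneg x.1.imJ, sq_nonneg x.1.imK,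
      sq_nonneg x.2.re, sq_nonneg x.2.imI, sq_nonneg x.2.imJ, sq_nonneg x.2.imK]

theorem isIm_iff {x : Octo} : IsIm x ↔ x.1.re = 0 := by
  simp [IsIm, oconj, Prod.ext_iff, Quaternion.ext_iff, self_eq_neg]

@[simps]
def reₗ : Octo →ₗ[ℝ] ℝ where
  toFun x := x.1.re
  map_add' _ _ := rfl
  map_smul' _ _ := rfl

def imSubmodule : Submodule ℝ Octo :=
  LinearMap.ker reₗ

theorem mem_imSubmodule {x : Octo} : x ∈ imSubmodule ↔ IsIm x := by
  simp [imSubmodule, isIm_iff]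

theorem finrank_imSubmodule : finrank ℝ imSubmodule = 7 := by
  have hsurj : LinearMap.range reₗ = ⊤ :=
    LinearMap.range_eq_top.2 fun r => ⟨((r : ℍ[ℝ]), 0), by simp⟩
  have := reₗ.finrank_range_add_finrank_ker
  rw [hsurj, finrank_top, finrank_self, finrank_prod, Quaternion.finrank_eq_four] at this
  rw [imSubmodule]
  omega

theorem isIm_comm (a b : Octo) : IsIm (comm a b) := by
  rw [isIm_iff]
  simp [comm, omul]
  ring

theorem comm_self (a : Octo) : comm a a = 0 :=
  sub_self _

def commₗ (a : Octo) : Octo →ₗ[ℝ] Octo where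
  toFun := comm a
  map_add' x y := by ext <;> simp [comm, omul] <;> ring
  map_smul' r x := by ext <;> simp [comm, omul] <;> ring

@[simp]
theorem commₗ_apply (a b : Octo) : commₗ a b = comm a b := rfl

theorem range_commₗ_le_imSubmodule (a : Octo) : LinearMap.range (commₗ a) ≤ imSubmodule := by
  rintro _ ⟨b, rfl⟩
  exact mem_imSubmodule.2 (isIm_comm a b)

theorem oinner_comm_self {x y : Octo} (hx : IsIm x) (hy : IsIm y) :
    oinner (comm x y) (comm x y) = 4 * (oinner x x * oinner y y - oinner x y ^ 2) := by
  rw [isIm_iff] at hx hy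
  simp [oinner_eq, comm, omul, hx, hy]
  ring

theorem inf_ker_commₗ_le_span {a : Octo} (ha : IsIm a) (ha0 : a ≠ 0) :
    imSubmodule ⊓ LinearMap.ker (commₗ a) ≤ ℝ ∙ a := by
  rintro b ⟨hb, hab : comm a b = 0⟩
  have haa : oinner a a ≠ 0 := mt oinner_self_eq_zero.1 ha0
  set t := oinner a b / oinner a a
  have hb' : IsIm (b - t • a) :=
    mem_imSubmodule.1 (sub_mem hb (imSubmodule.smul_mem t (mem_imSubmodule.2 ha)))
  have hcomm : comm a (b - t • a) = 0 := by
    rw [← commₗ_apply, map_sub, map_smul, commₗ_apply, commₗ_apply, hab, comm_self, smul_zero,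
      sub_zero]
  have horth : oinner a (b - t • a) = 0 := by
    have : oinner a (b - t • a) = oinner a b - t * oinner a a := by
      simp [oinner_eq]
      ring
    rw [this, div_mul_cancel₀ _ haa, sub_self]
  have hzero : oinner a a * oinner (b - t • a) (b - t • a) = 0 := by
    have := oinner_comm_self ha hb'
    rw [hcomm, horth, oinner_self_eq_zero.2 rfl] at this
    linarith
  have hbt : b = t • a :=
    sub_eq_zero.1 (oinner_self_eq_zero.1 ((mul_eq_zero.1 hzero).resolve_left haa))
  exact Submodule.mem_span_singleton.2 ⟨t, hbt.symm⟩

theorem finrank_add_finrank_le_seven {L M : Submodule ℝ Octo} (hL : L ≤ imSubmodule)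
    (hM : M ≤ imSubmodule) (hLM : ∀ x ∈ L, ∀ y ∈ M, oinner y x = 0) :
    finrank ℝ L + finrank ℝ M ≤ 7 := by
  have hdisj : L ⊓ M = ⊥ :=
    eq_bot_iff.2 fun x hx => oinner_self_eq_zero.1 (hLM x hx.1 x hx.2)
  calc finrank ℝ L + finrank ℝ M = finrank ℝ ↥(L ⊔ M) + finrank ℝ ↥(L ⊓ M) :=
        (Submodule.finrank_sup_add_finrank_inf_eq L M).symm
    _ = finrank ℝ ↥(L ⊔ M) := by rw [hdisj, finrank_bot, add_zero]
    _ ≤ finrank ℝ imSubmodule := Submodule.finrank_mono (sup_le hL hM)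
    _ = 7 := finrank_imSubmodule

end Octo

open Octo in
/-- Every subspace of `Im 𝕆` on which `λ(a,b,c) = ([a,b],c)` vanishes identically has
dimension at most 4. -/
theorem isotropic_dim_le_four (L : Submodule ℝ Octo)
    (him : ∀ x ∈ L, IsIm x)
    (hiso : ∀ a ∈ L, ∀ b ∈ L, ∀ c ∈ L, lam a b c = 0) :
    Module.finrank ℝ L ≤ 4 := by
  obtain rfl | hL := eq_or_ne L ⊥
  · simp
  obtain ⟨a, haL, ha0⟩ := Submodule.exists_mem_ne_zero_of_ne_bot hL
  have hLIm : L ≤ imSubmodule := fun x hx => mem_imSubmodule.2 (him x hx)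
  have hker : Module.finrank ℝ ↥(L ⊓ LinearMap.ker (commₗ a)) ≤ 1 :=
    (Submodule.finrank_mono ((inf_le_inf_right _ hLIm).trans
      (inf_ker_commₗ_le_span (him a haL) ha0))).trans (finrank_span_singleton ha0).le
  have hrank := Submodule.finrank_map_add_finrank_inf_ker (commₗ a) L
  have horth := finrank_add_finrank_le_seven hLIm
    (LinearMap.map_le_range.trans (range_commₗ_le_imSubmodule a))
    (by rintro x hx _ ⟨b, hb, rfl⟩; exact hiso a haL b hb x hx)
  omega

end
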